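/- arXiv:1510.01086 — 4 statements merged into one kernel-verified Lean document; each statement's English description precedes it below -/
import Mathlib

section
/- Let X be a topological space and let f : X → ℝ be a first Baire class function. Then for every a ∈ ℝ the set f⁻¹((a, +∞)) is a countable union of functionally closed subsets of X. -/
open Set Filter Topology TopologicalSpace

/-- A subset `A` of a topological space is functionally closed if it is the
zero set of a continuous real-valued function. -/
def FunctionallyClosed {X : Type*} [TopologicalSpace X] (A : Set X) : Prop :=
  ∃ g : X → ℝ, Continuous g ∧ A = g ⁻¹' {0}

/-- `A` is a countable union of functionally closed subsets. -/
def CountableUnionOfFunctionallyClosed {X : Type*} [TopologicalSpace X] (A : Set X) : Prop :=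
  ∃ F : ℕ → Set X, (∀ n, FunctionallyClosed (F n)) ∧ A = ⋃ n, F n

/-- `f : X → ℝ` is a first Baire class function: a pointwise limit of a
sequence of continuous functions. -/
def BaireOne {X : Type*} [TopologicalSpace X] (f : X → ℝ) : Prop :=
  ∃ g : ℕ → X → ℝ, (∀ n, Continuous (g n)) ∧
    ∀ x, Tendsto (fun n => g n x) atTop (𝓝 (f x))

lemma fc_le {X : Type*} [TopologicalSpace X] {g : X → ℝ} (hg : Continuous g) (c : ℝ) :
    FunctionallyClosed {x | c ≤ g x} := by
  refine ⟨fun x => min (g x - c) 0, (hg.sub continuous_const).min continuous_const, ?_⟩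
  ext x
  simp only [mem_setOf_eq, mem_preimage, mem_singleton_iff]
  constructor
  · intro h; exact min_eq_right (by linarith)
  · intro h
    by_contra hc
    push_neg at hc
    have : min (g x - c) 0 = g x - c := min_eq_left (by linarith)
    rw [h] at this; linarith

set_option maxHeartbeats 1000000 in
lemma fc_iInter {X : Type*} [TopologicalSpace X] {A : ℕ → Set X}
    (h : ∀ n, FunctionallyClosed (A n)) : FunctionallyClosed (⋂ n, A n) := by
  choose g hg hA using h
  have hnn : ∀ n x, 0 ≤ min |g n x| ((1/2:ℝ)^n) :=
    fun n x => le_min (abs_nonneg _) (by positivity)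
  have hbd : ∀ (n : ℕ) (x : X), ‖min |g n x| ((1/2:ℝ)^n)‖ ≤ (1/2:ℝ)^n := by
    intro n x
    rw [Real.norm_of_nonneg (hnn n x)]
    exact min_le_right _ _
  have hsum : ∀ x, Summable fun n => min |g n x| ((1/2:ℝ)^n) := by
    intro x
    exact Summable.of_nonneg_of_le (fun n => hnn n x) (fun n => min_le_right _ _)
      summable_geometric_two
  refine ⟨fun x => ∑' n, min |g n x| ((1/2:ℝ)^n), ?_, ?_⟩
  · exact continuous_tsum (f := fun (n:ℕ) (x:X) => min |g n x| ((1/2:ℝ)^n)) (u := fun n => (1/2:ℝ)^n)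
      (fun n => ((hg n).abs.min continuous_const)) summable_geometric_two hbd
  · ext x
    simp only [mem_iInter, mem_preimage, mem_singleton_iff]
    constructor
    · intro hx
      have : (fun n => min |g n x| ((1/2:ℝ)^n)) = fun _ => 0 := by
        funext n
        have : g n x = 0 := by
          have := hx n; rw [hA n] at this; simpa using this
        simp [this]
      rw [this, tsum_zero]
    · intro hx n
      have h1 : min |g n x| ((1/2:ℝ)^n) = 0 := by
        have hle := Summable.le_tsum (hsum x) n (fun m _ => hnn m x)
        rw [hx] at hle
        exact le_antisymm hle (hnn n x)
      have h2 : |g n x| = 0 := by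
        rcases min_eq_iff.mp h1 with ⟨h, _⟩ | ⟨h, _⟩
        · exact h
        · exact absurd h (by positivity)
      rw [hA n]
      simpa using abs_eq_zero.mp h2


theorem baire_one_preimage_Ioi
    {X : Type*} [TopologicalSpace X] (f : X → ℝ) (hf : BaireOne f) (a : ℝ) :
    CountableUnionOfFunctionallyClosed (f ⁻¹' Ioi a) := by
  obtain ⟨g, hg, hlim⟩ := hf
  set G : ℕ → ℕ → Set X := fun k m => ⋂ n, {x | a + 1/(k+1) ≤ g (n + m) x} with hG
  have hGfc : ∀ k m, FunctionallyClosed (G k m) :=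
    fun k m => fc_iInter (fun n => fc_le (hg (n + m)) _)
  have key : f ⁻¹' Ioi a = ⋃ k, ⋃ m, G k m := by
    ext x
    simp only [mem_preimage, mem_Ioi, mem_iUnion, hG, mem_iInter, mem_setOf_eq]
    constructor
    · intro hx
      obtain ⟨k, hk⟩ := exists_nat_one_div_lt (sub_pos.mpr hx)
      have hc : a + 1/(k+1) < f x := by
        have : (1:ℝ)/(k+1) < f x - a := hk
        linarith
      have hev : ∀ᶠ n in atTop, a + 1/(k+1) ≤ g n x :=
        (hlim x).eventually (eventually_ge_nhds hc)
      obtain ⟨m, hm⟩ := hev.exists_forall_of_atTop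
      exact ⟨k, m, fun n => hm (n + m) (Nat.le_add_left m n)⟩
    · rintro ⟨k, m, hkm⟩
      have htd : Tendsto (fun n => g (n + m) x) atTop (𝓝 (f x)) :=
        (hlim x).comp (tendsto_add_atTop_nat m)
      have hle : a + 1/(k+1) ≤ f x := ge_of_tendsto' htd hkm
      have : (0:ℝ) < 1/(k+1) := by positivity
      linarith
  let e : ℕ ≃ ℕ × ℕ := (Denumerable.eqv (ℕ × ℕ)).symm
  refine ⟨fun n => G (e n).1 (e n).2, fun n => hGfc _ _, ?_⟩
  rw [key]
  ext x
  simp only [mem_iUnion]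
  constructor
  · rintro ⟨k, m, h⟩
    exact ⟨e.symm (k, m), by simpa using h⟩
  · rintro ⟨n, h⟩
    exact ⟨(e n).1, (e n).2, h⟩
end

section
/- Let X be a topological space and let f : X → ℝ be a first Baire class function. Then f is a first functional Lebesgue class function, i.e. for every open set G ⊆ ℝ the preimage f⁻¹(G) is a countable union of functionally closed subsets of X. -/
/-!
In a perfectly normal space (such as `ℝ` or `ℝ^ℕ`) every closed set is a zero set. Hence zero
sets are closed under countable intersections (`⋂ᵢ gᵢ⁻¹(0)` is the preimage of `{0} ⊆ ℝ^ℕ`), and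
an open `G ⊆ ℝ` is `{φ > 0}` for a continuous `φ ≥ 0`. If `gₙ → f` pointwise, then
`f⁻¹(G) = ⋃ₖ ⋃_N ⋂_{n ≥ N} {φ ∘ gₙ ≥ 1/(k+1)}`: if `φ (f x) > 1/(k+1)` then eventually
`φ (gₙ x) ≥ 1/(k+1)`, and conversely the limit preserves the non-strict inequality.
-/

open Set Filter Topology TopologicalSpace

section

variable {X Y : Type*} [TopologicalSpace X] [TopologicalSpace Y]

theorem IsClosed.functionallyClosed [PerfectlyNormalSpace Y] {C : Set Y} (hC : IsClosed C) :
    FunctionallyClosed C := by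
  obtain ⟨g, hgC, -⟩ := perfectlyNormalSpace_iff_forall_isClosed_preimage_zero.mp ‹_› C hC
  exact ⟨g, g.continuous, hgC⟩

namespace FunctionallyClosed

theorem preimage {C : Set Y} (hC : FunctionallyClosed C) {h : X → Y} (hh : Continuous h) :
    FunctionallyClosed (h ⁻¹' C) := by
  obtain ⟨g, hg, rfl⟩ := hC
  exact ⟨g ∘ h, hg.comp hh, rfl⟩

theorem iInter {ι : Type*} [Countable ι] {A : ι → Set X} (hA : ∀ i, FunctionallyClosed (A i)) :
    FunctionallyClosed (⋂ i, A i) := by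
  choose g hg hgA using hA
  have hA_eq : ⋂ i, A i = (fun x i ↦ g i x) ⁻¹' {0} := by
    ext x
    simp [hgA, funext_iff]
  rw [hA_eq]
  exact isClosed_singleton.functionallyClosed.preimage (continuous_pi hg)

end FunctionallyClosed

namespace CountableUnionOfFunctionallyClosed

theorem iUnion {ι : Type*} [Countable ι] {A : ι → Set X}
    (hA : ∀ i, CountableUnionOfFunctionallyClosed (A i)) :
    CountableUnionOfFunctionallyClosed (⋃ i, A i) := by
  choose F hF hFA using hA
  rcases isEmpty_or_nonempty ι with _ | _
  · refine ⟨fun _ ↦ ∅, fun _ ↦ ⟨fun _ ↦ 1, continuous_const, by simp⟩, by simp⟩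
  obtain ⟨s, hs⟩ := exists_surjective_nat (ι × ℕ)
  refine ⟨fun k ↦ F (s k).1 (s k).2, fun k ↦ hF _ _, ?_⟩
  rw [hs.iUnion_comp (fun p ↦ F p.1 p.2), iUnion_prod']
  simp only [hFA]

theorem setOf_eventually_mem {g : ℕ → X → Y} (hg : ∀ n, Continuous (g n)) {C : Set Y}
    (hC : FunctionallyClosed C) :
    CountableUnionOfFunctionallyClosed {x | ∀ᶠ n in atTop, g n x ∈ C} :=
  ⟨fun N ↦ ⋂ n : Ici N, g n ⁻¹' C, fun _ ↦ .iInter fun n ↦ hC.preimage (hg n),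
    by ext x; simp [eventually_atTop]⟩

theorem setOf_pos_of_tendsto {h : ℕ → X → ℝ} {h₀ : X → ℝ} (hh : ∀ n, Continuous (h n))
    (hlim : ∀ x, Tendsto (h · x) atTop (𝓝 (h₀ x))) :
    CountableUnionOfFunctionallyClosed {x | 0 < h₀ x} := by
  have hpos_eq :
      {x | 0 < h₀ x} = ⋃ k : ℕ, {x | ∀ᶠ n in atTop, h n x ∈ Ici (1 / ((k : ℝ) + 1))} := by
    ext x
    simp only [mem_ofPred_eq, mem_iUnion, mem_Ici]
    constructor
    · intro hx
      obtain ⟨k, hk⟩ := exists_nat_one_div_lt hx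
      exact ⟨k, (hlim x).eventually_const_le hk⟩
    · rintro ⟨k, hk⟩
      exact Nat.one_div_pos_of_nat.trans_le (ge_of_tendsto (hlim x) hk)
  rw [hpos_eq]
  exact .iUnion fun _ ↦ setOf_eventually_mem hh isClosed_Ici.functionallyClosed

theorem preimage_of_tendsto [PerfectlyNormalSpace Y] {g : ℕ → X → Y} {f : X → Y}
    (hg : ∀ n, Continuous (g n)) (hlim : ∀ x, Tendsto (g · x) atTop (𝓝 (f x)))
    {G : Set Y} (hG : IsOpen G) : CountableUnionOfFunctionallyClosed (f ⁻¹' G) := by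
  obtain ⟨φ, hφG, hφ_nonneg⟩ :=
    perfectlyNormalSpace_iff_forall_isClosed_preimage_zero.mp ‹_› Gᶜ hG.isClosed_compl
  have hG_eq : f ⁻¹' G = {x | 0 < φ (f x)} := by
    ext x
    simpa [lt_iff_le_and_ne, (hφ_nonneg (f x)).1, eq_comm] using congr(f x ∉ $hφG)
  rw [hG_eq]
  exact setOf_pos_of_tendsto (fun n ↦ φ.continuous.comp (hg n))
    fun x ↦ (φ.continuous.tendsto (f x)).comp (hlim x)

end CountableUnionOfFunctionallyClosed

end

theorem baire_one_is_first_functional_lebesgue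
    {X : Type*} [TopologicalSpace X] (f : X → ℝ) (hf : BaireOne f) :
    ∀ G : Set ℝ, IsOpen G → CountableUnionOfFunctionallyClosed (f ⁻¹' G) := by
  obtain ⟨g, hg, hlim⟩ := hf
  exact fun G hG ↦ .preimage_of_tendsto hg hlim hG
end

section
/- Let X be a topological space and let g : X → ℝ be a first Baire class function. Then there exists a separately continuous function f : X × X → ℝ (with respect to the product topology on X × X) such that g is the diagonal of f, i.e. f(x, x) = g(x) for every x ∈ X. -/
open Set Filter Topology TopologicalSpace

/-!
Write `g = lim hₙ` with `hₙ` continuous and let `nₘ x` be the first `k` from which `(hᵢ x)`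
stays within `2⁻ᵐ` of `hₖ x`. It is the first zero of a sequence of continuous functions
`uₖ ≥ 0`, and `h_{nₘ x} x` is `2⁻ᵐ`-close to `g x`.

A function `x ↦ φ_{ν x} x`, with `φₖ` continuous and `ν x` the first zero of continuous
`uₖ ≥ 0`, is the diagonal of a separately continuous function. The kernel
`(s - t)² / (s² + t²)`, set to `1` when `s` or `t` vanishes, is separately continuous, vanishes
on the diagonal away from `0` and equals `1` as soon as one argument vanishes. Hence the running
maxima `Φₖ (x, y)` of the kernel at `(uⱼ x, uⱼ y)`, `j < k`, climb from `0` to `1` by the step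
`min (ν x) (ν y) + 1`, and `∑ₖ (Φₖ₊₁ - Φₖ)(x, y) · φₖ x` is a convex combination of the `φₖ x`
which is a fixed finite sum in each variable separately and equals `φ_{ν x} x` on the diagonal.

Applying this to `h_{n₀ x} x`, and with paired indices to the increments
`h_{nₘ₊₁ x} x - h_{nₘ x} x` clamped to their bound `2 · 2⁻ᵐ`, yields separately continuous
functions whose series converges uniformly and has diagonal `g`.
-/

section SeparatelyContinuous

variable {X Y Z : Type*} [TopologicalSpace X] [TopologicalSpace Y] [TopologicalSpace Z]

def SeparatelyContinuous (f : X × Y → Z) : Prop :=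
  (∀ y, Continuous fun x => f (x, y)) ∧ ∀ x, Continuous fun y => f (x, y)

lemma SeparatelyContinuous.continuousOn_setOf_snd_eq {f : X × Y → Z}
    (hf : SeparatelyContinuous f) (y : Y) : ContinuousOn f {p | p.2 = y} :=
  ((hf.1 y).comp continuous_fst).continuousOn.congr fun ⟨_, _⟩ hp => by simp_all

lemma SeparatelyContinuous.continuousOn_setOf_fst_eq {f : X × Y → Z}
    (hf : SeparatelyContinuous f) (x : X) : ContinuousOn f {p | p.1 = x} :=
  ((hf.2 x).comp continuous_snd).continuousOn.congr fun ⟨_, _⟩ hp => by simp_all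

lemma SeparatelyContinuous.add [Add Z] [ContinuousAdd Z] {f g : X × Y → Z}
    (hf : SeparatelyContinuous f) (hg : SeparatelyContinuous g) :
    SeparatelyContinuous fun p => f p + g p :=
  ⟨fun y => (hf.1 y).add (hg.1 y), fun x => (hf.2 x).add (hg.2 x)⟩

lemma SeparatelyContinuous.tsum {F : Type*} [NormedAddCommGroup F] [CompleteSpace F]
    {f : ℕ → X × Y → F} {c : ℕ → ℝ} (hf : ∀ m, SeparatelyContinuous (f m)) (hc : Summable c)
    (hfc : ∀ m p, ‖f m p‖ ≤ c m) : SeparatelyContinuous fun p => ∑' m, f m p :=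
  ⟨fun y => continuous_tsum (fun m => (hf m).1 y) hc fun m x => hfc m (x, y),
    fun x => continuous_tsum (fun m => (hf m).2 x) hc fun m y => hfc m (x, y)⟩

end SeparatelyContinuous

noncomputable def sepKernel (s t : ℝ) : ℝ :=
  if s = 0 ∨ t = 0 then 1 else (s - t) ^ 2 / (s ^ 2 + t ^ 2)

lemma sepKernel_le_one {s t : ℝ} (hs : 0 ≤ s) (ht : 0 ≤ t) : sepKernel s t ≤ 1 := by
  unfold sepKernel
  split_ifs with hst
  · exact le_rfl
  · have hpos : 0 < s ^ 2 + t ^ 2 :=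
      add_pos_of_pos_of_nonneg (pow_pos (hs.lt_of_ne' (not_or.1 hst).1) 2) (sq_nonneg t)
    rw [div_le_one hpos]
    nlinarith [mul_nonneg hs ht]

lemma sepKernel_self {s : ℝ} (hs : s ≠ 0) : sepKernel s s = 0 := by
  simp [sepKernel, hs]

lemma sepKernel_zero_left (t : ℝ) : sepKernel 0 t = 1 := by simp [sepKernel]

lemma sepKernel_zero_right (s : ℝ) : sepKernel s 0 = 1 := by simp [sepKernel]

lemma sepKernel_comm (s t : ℝ) : sepKernel s t = sepKernel t s := by
  simp only [sepKernel, or_comm (a := s = 0)]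
  rw [add_comm (s ^ 2), ← neg_sub t s, neg_sq]

lemma continuous_sepKernel_left (t : ℝ) : Continuous fun s => sepKernel s t := by
  rcases eq_or_ne t 0 with rfl | ht
  · simpa only [sepKernel_zero_right] using continuous_const
  · have hformula : (fun s => sepKernel s t) = fun s => (s - t) ^ 2 / (s ^ 2 + t ^ 2) := by
      funext s
      rcases eq_or_ne s 0 with rfl | hs
      · simp [sepKernel, ht]
      · simp [sepKernel, hs, ht]
    rw [hformula]
    exact (by fun_prop : Continuous fun s : ℝ => (s - t) ^ 2).div (by fun_prop)
      fun s => by positivity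

lemma continuous_sepKernel_right (s : ℝ) : Continuous fun t => sepKernel s t := by
  simpa only [sepKernel_comm s] using continuous_sepKernel_left s

section Patch

variable {X : Type*} {u φ : ℕ → X → ℝ}

noncomputable def kernelMax (u : ℕ → X → ℝ) : ℕ → X → X → ℝ
  | 0 => fun _ _ => 0
  | k + 1 => fun x y => max (kernelMax u k x y) (sepKernel (u k x) (u k y))

lemma kernelMax_le_succ (k : ℕ) (x y : X) : kernelMax u k x y ≤ kernelMax u (k + 1) x y :=
  le_max_left _ _

lemma kernelMax_le_one (hu0 : ∀ k x, 0 ≤ u k x) (k : ℕ) (x y : X) : kernelMax u k x y ≤ 1 := by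
  induction k with
  | zero => exact zero_le_one
  | succ k ih => exact max_le ih (sepKernel_le_one (hu0 k x) (hu0 k y))

lemma kernelMax_eq_one (hu0 : ∀ k x, 0 ≤ u k x) {j k : ℕ} {x y : X} (hjk : j < k)
    (hz : u j x = 0 ∨ u j y = 0) : kernelMax u k x y = 1 := by
  induction k, hjk using Nat.le_induction with
  | base =>
    have hone : sepKernel (u j x) (u j y) = 1 := by
      rcases hz with hz | hz <;> simp only [hz, sepKernel_zero_left, sepKernel_zero_right]
    exact (congrArg _ hone).trans (max_eq_right (kernelMax_le_one hu0 j x y))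
  | succ k _ ih =>
    exact (congrArg (max · _) ih).trans (max_eq_left (sepKernel_le_one (hu0 k x) (hu0 k y)))

lemma kernelMax_self_eq_zero {k : ℕ} {x : X} (h : ∀ j < k, u j x ≠ 0) :
    kernelMax u k x x = 0 := by
  induction k with
  | zero => rfl
  | succ k ih =>
    change max (kernelMax u k x x) (sepKernel (u k x) (u k x)) = 0
    rw [ih fun j hj => h j (by omega), sepKernel_self (h k k.lt_succ_self), max_self]

noncomputable def patchSum (u φ : ℕ → X → ℝ) (K : ℕ) (x y : X) : ℝ :=
  ∑ k ∈ Finset.range (K + 1), (kernelMax u (k + 1) x y - kernelMax u k x y) * φ k x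

lemma patchSum_eq_of_le (hu0 : ∀ k x, 0 ≤ u k x) {K L : ℕ} {x y : X}
    (hz : u K x = 0 ∨ u K y = 0) (hKL : K ≤ L) : patchSum u φ L x y = patchSum u φ K x y := by
  refine (Finset.sum_subset (Finset.range_subset_range.2 (by omega)) fun k _ hk => ?_).symm
  rw [Finset.mem_range, not_lt] at hk
  rw [kernelMax_eq_one hu0 (by omega : K < k + 1) hz, kernelMax_eq_one hu0 (by omega : K < k) hz,
    sub_self, zero_mul]

lemma abs_patchSum_le (hu0 : ∀ k x, 0 ≤ u k x) {K : ℕ} {x y : X} {c : ℝ}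
    (hz : u K x = 0 ∨ u K y = 0) (hc : ∀ k, |φ k x| ≤ c) : |patchSum u φ K x y| ≤ c := by
  have hw : ∀ k, 0 ≤ kernelMax u (k + 1) x y - kernelMax u k x y :=
    fun k => sub_nonneg.2 (kernelMax_le_succ k x y)
  calc |patchSum u φ K x y|
      ≤ ∑ k ∈ Finset.range (K + 1), (kernelMax u (k + 1) x y - kernelMax u k x y) * c := by
        refine (Finset.abs_sum_le_sum_abs _ _).trans (Finset.sum_le_sum fun k _ => ?_)
        rw [abs_mul, abs_of_nonneg (hw k)]
        exact mul_le_mul_of_nonneg_left (hc k) (hw k)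
    _ = c := by
        rw [← Finset.sum_mul, Finset.sum_range_sub (kernelMax u · x y),
          kernelMax_eq_one hu0 K.lt_succ_self hz]
        simp [kernelMax]

lemma patchSum_self (hu0 : ∀ k x, 0 ≤ u k x) {K : ℕ} {x : X} (hz : u K x = 0)
    (hpos : ∀ j < K, u j x ≠ 0) : patchSum u φ K x x = φ K x := by
  have hzero : ∀ k ≤ K, kernelMax u k x x = 0 :=
    fun k hk => kernelMax_self_eq_zero fun j hj => hpos j (by omega)
  rw [patchSum, Finset.sum_range_succ, Finset.sum_eq_zero fun k hk => ?_,
    kernelMax_eq_one hu0 K.lt_succ_self (Or.inl hz), hzero K le_rfl]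
  · ring
  · rw [Finset.mem_range] at hk
    rw [hzero k hk.le, hzero (k + 1) hk, sub_self, zero_mul]

noncomputable def patch (u φ : ℕ → X → ℝ) (ν : X → ℕ) (p : X × X) : ℝ :=
  patchSum u φ (min (ν p.1) (ν p.2)) p.1 p.2

lemma eq_zero_or_eq_zero_at_min {ν : X → ℕ} (hν : ∀ x, IsLeast {k | u k x = 0} (ν x))
    (x y : X) :
    u (min (ν x) (ν y)) x = 0 ∨ u (min (ν x) (ν y)) y = 0 := by
  rcases min_choice (ν x) (ν y) with h | h
  · exact .inl (by rw [h]; exact (hν x).1)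
  · exact .inr (by rw [h]; exact (hν y).1)

lemma patch_self (hu0 : ∀ k x, 0 ≤ u k x) {ν : X → ℕ}
    (hν : ∀ x, IsLeast {k | u k x = 0} (ν x)) (x : X) : patch u φ ν (x, x) = φ (ν x) x := by
  rw [patch, min_self]
  exact patchSum_self hu0 (hν x).1 fun j hj hzero => (hν x).2 hzero |>.not_gt hj

lemma abs_patch_le (hu0 : ∀ k x, 0 ≤ u k x) {ν : X → ℕ}
    (hν : ∀ x, IsLeast {k | u k x = 0} (ν x)) {c : ℝ} {p : X × X} (hc : ∀ k, |φ k p.1| ≤ c) :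
    |patch u φ ν p| ≤ c :=
  abs_patchSum_le hu0 (eq_zero_or_eq_zero_at_min hν p.1 p.2) hc

variable [TopologicalSpace X]

lemma continuous_kernelMax_left (hu : ∀ k, Continuous (u k)) (k : ℕ) (y : X) :
    Continuous fun x => kernelMax u k x y := by
  induction k with
  | zero => exact continuous_const
  | succ k ih => exact ih.max ((continuous_sepKernel_left _).comp (hu k))

lemma continuous_kernelMax_right (hu : ∀ k, Continuous (u k)) (k : ℕ) (x : X) :
    Continuous fun y => kernelMax u k x y := by
  induction k with
  | zero => exact continuous_const
  | succ k ih => exact ih.max ((continuous_sepKernel_right _).comp (hu k))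

lemma separatelyContinuous_patch (hu : ∀ k, Continuous (u k)) (hu0 : ∀ k x, 0 ≤ u k x)
    (hφ : ∀ k, Continuous (φ k)) {ν : X → ℕ} (hν : ∀ x, IsLeast {k | u k x = 0} (ν x)) :
    SeparatelyContinuous (patch u φ ν) := by
  constructor
  · intro y
    have hfix : (fun x => patch u φ ν (x, y)) = fun x => patchSum u φ (ν y) x y :=
      funext fun x =>
        (patchSum_eq_of_le hu0 (eq_zero_or_eq_zero_at_min hν x y) (min_le_right _ _)).symm
    rw [hfix]
    exact continuous_finsetSum _ fun k _ =>
      ((continuous_kernelMax_left hu _ y).sub (continuous_kernelMax_left hu k y)).mul (hφ k)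
  · intro x
    have hfix : (fun y => patch u φ ν (x, y)) = fun y => patchSum u φ (ν x) x y :=
      funext fun y =>
        (patchSum_eq_of_le hu0 (eq_zero_or_eq_zero_at_min hν x y) (min_le_left _ _)).symm
    rw [hfix]
    exact continuous_finsetSum _ fun k _ =>
      ((continuous_kernelMax_right hu _ x).sub (continuous_kernelMax_right hu k x)).mul
        continuous_const

end Patch

lemma Nat.pair_le_pair {a₁ a₂ b₁ b₂ : ℕ} (ha : a₁ ≤ a₂) (hb : b₁ ≤ b₂) :
    Nat.pair a₁ b₁ ≤ Nat.pair a₂ b₂ :=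
  calc Nat.pair a₁ b₁ ≤ Nat.pair a₂ b₁ :=
        StrictMono.monotone (fun _ _ h => Nat.pair_lt_pair_left b₁ h) ha
    _ ≤ Nat.pair a₂ b₂ := StrictMono.monotone (fun _ _ h => Nat.pair_lt_pair_right a₂ h) hb

lemma isLeast_add_unpair {u v : ℕ → ℝ} (hu : ∀ k, 0 ≤ u k) (hv : ∀ k, 0 ≤ v k) {a b : ℕ}
    (ha : IsLeast {k | u k = 0} a) (hb : IsLeast {k | v k = 0} b) :
    IsLeast {i | u i.unpair.1 + v i.unpair.2 = 0} (Nat.pair a b) := by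
  refine ⟨?_, fun i hi => ?_⟩
  · change u _ + v _ = 0
    rw [Nat.unpair_pair, ha.1, hb.1, add_zero]
  · obtain ⟨hi₁, hi₂⟩ := (add_eq_zero_iff_of_nonneg (hu _) (hv _)).1 hi
    simpa only [Nat.pair_unpair] using Nat.pair_le_pair (ha.2 hi₁) (hb.2 hi₂)

/-- Pair the two indices with `Nat.pair` and clamp `φ` to `[-c, c]`. -/
theorem exists_separatelyContinuous_of_isLeast₂ {X : Type*} [TopologicalSpace X]
    {u v : ℕ → X → ℝ} {φ : ℕ → ℕ → X → ℝ} {a b : X → ℕ} {c : ℝ}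
    (hu : ∀ k, Continuous (u k)) (hv : ∀ k, Continuous (v k))
    (hu0 : ∀ k x, 0 ≤ u k x) (hv0 : ∀ k x, 0 ≤ v k x) (hφ : ∀ j k, Continuous (φ j k))
    (ha : ∀ x, IsLeast {k | u k x = 0} (a x)) (hb : ∀ x, IsLeast {k | v k x = 0} (b x))
    (hc : ∀ x, |φ (a x) (b x) x| ≤ c) :
    ∃ f : X × X → ℝ, SeparatelyContinuous f ∧ (∀ p, |f p| ≤ c) ∧
      ∀ x, f (x, x) = φ (a x) (b x) x := by
  set w : ℕ → X → ℝ := fun i x => u i.unpair.1 x + v i.unpair.2 x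
  set ψ : ℕ → X → ℝ := fun i x => max (-c) (min c (φ i.unpair.1 i.unpair.2 x))
  have hw0 : ∀ i x, 0 ≤ w i x := fun i x => add_nonneg (hu0 _ x) (hv0 _ x)
  have hw : ∀ x, IsLeast {i | w i x = 0} (Nat.pair (a x) (b x)) :=
    fun x => isLeast_add_unpair (hu0 · x) (hv0 · x) (ha x) (hb x)
  have hψ : ∀ i, Continuous (ψ i) :=
    fun i => continuous_const.max (continuous_const.min (hφ _ _))
  refine ⟨patch w ψ fun x => Nat.pair (a x) (b x),
    separatelyContinuous_patch (fun i => (hu _).add (hv _)) hw0 hψ hw,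
    fun p => abs_patch_le hw0 hw fun k => ?_, fun x => ?_⟩
  · have hc0 : 0 ≤ c := (abs_nonneg _).trans (hc p.1)
    exact abs_le.2 ⟨le_max_left _ _, max_le (by linarith) (min_le_left _ _)⟩
  · rw [patch_self hw0 hw]
    obtain ⟨hlo, hhi⟩ := abs_le.1 (hc x)
    simp only [ψ, Nat.unpair_pair, min_eq_right hhi, max_eq_right hlo]

section CauchyDefect

variable {X E : Type*} [PseudoMetricSpace E] {h : ℕ → X → E}

noncomputable def cauchyDefect (h : ℕ → X → E) (ε : ℝ) (k : ℕ) (x : X) : ℝ :=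
  ∑' i : ℕ, (1 / 2 : ℝ) ^ i * min 1 (max 0 (dist (h (k + i) x) (h k x) - ε))

lemma half_pow_mul_clamp_nonneg (i : ℕ) (t : ℝ) : 0 ≤ (1 / 2 : ℝ) ^ i * min 1 (max 0 t) :=
  mul_nonneg (by positivity) (le_min zero_le_one (le_max_left _ _))

lemma half_pow_mul_clamp_le (i : ℕ) (t : ℝ) :
    (1 / 2 : ℝ) ^ i * min 1 (max 0 t) ≤ (1 / 2 : ℝ) ^ i :=
  mul_le_of_le_one_right (by positivity) (min_le_left _ _)

lemma cauchyDefect_nonneg (ε : ℝ) (k : ℕ) (x : X) : 0 ≤ cauchyDefect h ε k x :=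
  tsum_nonneg fun i => half_pow_mul_clamp_nonneg i _

lemma cauchyDefect_eq_zero_iff {ε : ℝ} {k : ℕ} {x : X} :
    cauchyDefect h ε k x = 0 ↔ ∀ i, dist (h (k + i) x) (h k x) ≤ ε := by
  have hnonneg := fun i => half_pow_mul_clamp_nonneg i (dist (h (k + i) x) (h k x) - ε)
  have hs : Summable fun i => (1 / 2 : ℝ) ^ i * min 1 (max 0 (dist (h (k + i) x) (h k x) - ε)) :=
    .of_nonneg_of_le hnonneg (fun i => half_pow_mul_clamp_le i _) summable_geometric_two
  rw [cauchyDefect, ← hs.hasSum_iff, hasSum_zero_iff_of_nonneg hnonneg, funext_iff]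
  refine forall_congr' fun i => ?_
  simp only [Pi.zero_apply, mul_eq_zero, pow_eq_zero_iff', one_div, inv_eq_zero,
    OfNat.ofNat_ne_zero, false_and, false_or]
  grind

lemma exists_cauchyDefect_eq_zero {x : X} (hx : CauchySeq fun k => h k x) {ε : ℝ} (hε : 0 < ε) :
    ∃ k, cauchyDefect h ε k x = 0 := by
  obtain ⟨N, hN⟩ := Metric.cauchySeq_iff'.1 hx ε hε
  exact ⟨N, cauchyDefect_eq_zero_iff.2 fun i => (hN (N + i) (by omega)).le⟩

lemma dist_le_of_cauchyDefect_eq_zero {x : X} {l : E} (hx : Tendsto (fun k => h k x) atTop (𝓝 l))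
    {ε : ℝ} {k : ℕ} (hk : cauchyDefect h ε k x = 0) : dist l (h k x) ≤ ε := by
  refine Metric.isClosed_closedBall.mem_of_tendsto (hx.comp (tendsto_add_atTop_nat k))
    (Eventually.of_forall fun i => ?_)
  simpa only [Function.comp_apply, add_comm i, Metric.mem_closedBall] using
    cauchyDefect_eq_zero_iff.1 hk i

lemma continuous_cauchyDefect [TopologicalSpace X] (hh : ∀ k, Continuous (h k)) (ε : ℝ) (k : ℕ) :
    Continuous (cauchyDefect h ε k) :=
  continuous_tsum (fun i => continuous_const.mul (continuous_const.min (continuous_const.max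
      (((hh (k + i)).dist (hh k)).sub continuous_const))))
    summable_geometric_two fun i x => by
      rw [Real.norm_of_nonneg (half_pow_mul_clamp_nonneg i _)]
      exact half_pow_mul_clamp_le i _

end CauchyDefect

lemma hasSum_sub_succ_of_tendsto {G : Type*} [AddCommGroup G] [TopologicalSpace G]
    [IsTopologicalAddGroup G] [T2Space G] {a : ℕ → G} {l : G} (ha : Tendsto a atTop (𝓝 l))
    (hs : Summable fun m => a (m + 1) - a m) : HasSum (fun m => a (m + 1) - a m) (l - a 0) := by
  rw [hs.hasSum_iff_tendsto_nat]
  simpa only [Finset.sum_range_sub] using ha.sub_const (a 0)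

lemma abs_sub_succ_le_of_dist_le {a : ℕ → ℝ} {l : ℝ} (ha : ∀ m, dist l (a m) ≤ (1 / 2) ^ m)
    (m : ℕ) : |a (m + 1) - a m| ≤ 2 * (1 / 2) ^ m :=
  calc _ ≤ dist l (a (m + 1)) + dist l (a m) := dist_triangle_left _ _ _
    _ ≤ 2 * (1 / 2) ^ m := by
      have hpos : (0 : ℝ) ≤ (1 / 2) ^ m := by positivity
      linarith [ha (m + 1), ha m, pow_succ (1 / 2 : ℝ) m]

lemma hasSum_sub_succ_of_dist_le {a : ℕ → ℝ} {l : ℝ} (ha : ∀ m, dist l (a m) ≤ (1 / 2) ^ m) :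
    HasSum (fun m => a (m + 1) - a m) (l - a 0) := by
  refine hasSum_sub_succ_of_tendsto ?_
    (.of_norm_bounded (summable_geometric_two.mul_left 2) (abs_sub_succ_le_of_dist_le ha))
  exact tendsto_iff_dist_tendsto_zero.2 <| squeeze_zero (fun _ => dist_nonneg)
    (fun m => (dist_comm _ _).trans_le (ha m))
    (tendsto_pow_atTop_nhds_zero_of_lt_one (by norm_num) (by norm_num))

theorem baire_one_is_diagonal_of_separately_continuous
    {X : Type*} [TopologicalSpace X] (g : X → ℝ) (hg : BaireOne g) :
    ∃ f : X × X → ℝ,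
      (∀ x₂ : X, ContinuousOn f {p : X × X | p.2 = x₂}) ∧
      (∀ x₁ : X, ContinuousOn f {p : X × X | p.1 = x₁}) ∧
      ∀ x : X, f (x, x) = g x := by
  classical
  obtain ⟨h, hh, hlim⟩ := hg
  set u : ℕ → ℕ → X → ℝ := fun m => cauchyDefect h ((1 / 2) ^ m)
  have hcont : ∀ m k, Continuous (u m k) := fun m => continuous_cauchyDefect hh _
  have hu0 : ∀ m k x, 0 ≤ u m k x := fun m => cauchyDefect_nonneg _
  have hzero : ∀ m x, ∃ k, u m k x = 0 :=
    fun m x => exists_cauchyDefect_eq_zero (hlim x).cauchySeq (by positivity)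
  set n : ℕ → X → ℕ := fun m x => Nat.find (hzero m x)
  have hn : ∀ m x, IsLeast {k | u m k x = 0} (n m x) := fun m x => Nat.isLeast_find _
  have hclose : ∀ x m, dist (g x) (h (n m x) x) ≤ (1 / 2) ^ m :=
    fun x m => dist_le_of_cauchyDefect_eq_zero (hlim x) (hn m x).1
  choose f hf hfc hfd using fun m => exists_separatelyContinuous_of_isLeast₂ (hcont m)
    (hcont (m + 1)) (hu0 m) (hu0 (m + 1)) (φ := fun j k x => h k x - h j x)
    (fun j k => (hh k).sub (hh j)) (hn m) (hn (m + 1))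
    fun x => abs_sub_succ_le_of_dist_le (hclose x) m
  have hF := (separatelyContinuous_patch (hcont 0) (hu0 0) hh (hn 0)).add
    (.tsum hf (summable_geometric_two.mul_left 2) hfc)
  refine ⟨_, hF.continuousOn_setOf_snd_eq, hF.continuousOn_setOf_fst_eq, fun x => ?_⟩
  simp only [patch_self (hu0 0) (hn 0), hfd, (hasSum_sub_succ_of_dist_le (hclose x)).tsum_eq]
  ring
end

section
/- Let X be a topological space, let ν be a topology on the set X × X that is finer than the product topology (equivalently, such that both projections from (X × X, ν) to X are continuous), and let g : X → ℝ be a first Baire class function on X. Then there exists a function f : X × X → ℝ that is separately continuous with respect to ν and such that g is the diagonal of f, i.e. f(x, x) = g(x) for every x ∈ X. -/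
open Set Filter Topology TopologicalSpace

namespace BaireDiagAux

noncomputable def theta (n : ℕ) (t : ℝ) : ℝ := min 1 (max 0 (2 - 4 ^ n * t))

lemma theta_continuous (n : ℕ) : Continuous (theta n) := by
  unfold theta
  exact continuous_const.min (continuous_const.max
    (continuous_const.sub (continuous_const.mul continuous_id)))

lemma theta_nonneg (n : ℕ) (t : ℝ) : 0 ≤ theta n t :=
  le_min zero_le_one (le_max_left _ _)

lemma theta_le_one (n : ℕ) (t : ℝ) : theta n t ≤ 1 := min_le_left _ _

lemma theta_eq_one {n : ℕ} {t : ℝ} (h : 4 ^ n * t ≤ 1) : theta n t = 1 := by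
  unfold theta
  rw [max_eq_right (by linarith : (0:ℝ) ≤ 2 - 4 ^ n * t), min_eq_left (by linarith)]

lemma theta_eq_zero {n : ℕ} {t : ℝ} (h : (2:ℝ) ≤ 4 ^ n * t) : theta n t = 0 := by
  unfold theta
  rw [max_eq_left (by linarith : 2 - 4 ^ n * t ≤ (0:ℝ)), min_eq_right (by norm_num)]

noncomputable def phi {X : Type*} (G : ℕ → X → ℝ) (p : X × X) : ℝ :=
  ∑' n, (2:ℝ)⁻¹ ^ n * min 1 |G n p.1 - G n p.2|

variable {X : Type*} (G : ℕ → X → ℝ)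

lemma phi_term_nonneg (n : ℕ) (p : X × X) :
    0 ≤ (2:ℝ)⁻¹ ^ n * min 1 |G n p.1 - G n p.2| :=
  mul_nonneg (by positivity) (le_min zero_le_one (abs_nonneg _))

lemma phi_term_le (n : ℕ) (p : X × X) :
    (2:ℝ)⁻¹ ^ n * min 1 |G n p.1 - G n p.2| ≤ (2:ℝ)⁻¹ ^ n :=
  mul_le_of_le_one_right (by positivity) (min_le_left _ _)

lemma phi_summable (p : X × X) :
    Summable (fun n => (2:ℝ)⁻¹ ^ n * min 1 |G n p.1 - G n p.2|) :=
  Summable.of_nonneg_of_le (fun n => phi_term_nonneg G n p) (fun n => phi_term_le G n p)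
    (summable_geometric_of_lt_one (by norm_num) (by norm_num))

lemma phi_nonneg (p : X × X) : 0 ≤ phi G p :=
  tsum_nonneg (fun n => phi_term_nonneg G n p)

lemma term_le_phi (k : ℕ) (p : X × X) :
    (2:ℝ)⁻¹ ^ k * min 1 |G k p.1 - G k p.2| ≤ phi G p :=
  Summable.le_tsum (phi_summable G p) k (fun j _ => phi_term_nonneg G j p)

lemma min_le_phi (k : ℕ) (p : X × X) :
    min 1 |G k p.1 - G k p.2| ≤ 2 ^ k * phi G p := by
  have h := term_le_phi G k p
  rw [inv_pow] at h
  have h2 : (0:ℝ) < 2 ^ k := by positivity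
  calc min 1 |G k p.1 - G k p.2|
      = 2 ^ k * (((2:ℝ) ^ k)⁻¹ * min 1 |G k p.1 - G k p.2|) := by field_simp
    _ ≤ 2 ^ k * phi G p := mul_le_mul_of_nonneg_left h h2.le

lemma abs_le_of_phi {k : ℕ} {p : X × X} (h : 2 ^ k * phi G p < 1) :
    |G k p.1 - G k p.2| ≤ 2 ^ k * phi G p := by
  have hm := min_le_phi G k p
  rcases min_cases (1:ℝ) |G k p.1 - G k p.2| with ⟨he, _⟩ | ⟨he, _⟩
  · rw [he] at hm; linarith
  · rwa [he] at hm

lemma eq_of_phi_eq_zero {p : X × X} (h : phi G p = 0) (k : ℕ) : G k p.1 = G k p.2 := by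
  have h1 := min_le_phi G k p
  rw [h, mul_zero] at h1
  have h2 : min 1 |G k p.1 - G k p.2| = 0 :=
    le_antisymm h1 (le_min zero_le_one (abs_nonneg _))
  rcases min_cases (1:ℝ) |G k p.1 - G k p.2| with ⟨he, _⟩ | ⟨he, _⟩
  · rw [he] at h2; norm_num at h2
  · rw [he] at h2; exact sub_eq_zero.mp (abs_eq_zero.mp h2)

lemma phi_diag (x : X) : phi G (x, x) = 0 := by
  unfold phi
  convert tsum_zero with n
  simp

lemma phi_continuous [TopologicalSpace X] (hGc : ∀ n, Continuous (G n)) :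
    Continuous (phi G) := by
  refine continuous_tsum (u := fun n => (2:ℝ)⁻¹ ^ n) ?_ (summable_geometric_of_lt_one (by norm_num) (by norm_num)) ?_
  · intro n
    exact continuous_const.mul (continuous_const.min
      (((hGc n).comp continuous_fst).sub ((hGc n).comp continuous_snd)).abs)
  · intro n p
    rw [Real.norm_eq_abs, abs_of_nonneg (phi_term_nonneg G n p)]
    exact phi_term_le G n p


noncomputable def fd {X : Type*} (G : ℕ → X → ℝ) (g : X → ℝ) (p : X × X) : ℝ :=
  if phi G p = 0 then g p.1
  else G 0 p.1 + ∑' n, (G (n + 1) p.1 - G n p.1) * theta n (phi G p)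

variable {X : Type*} (G : ℕ → X → ℝ)

lemma tsum_eval (x : X) {t : ℝ} (m : ℕ) (h1 : 1 < 4 ^ (m + 1) * t) (h2 : 4 ^ m * t ≤ 1) :
    ∑' n, (G (n + 1) x - G n x) * theta n t
      = (G (m + 1) x - G 0 x) + (G (m + 2) x - G (m + 1) x) * theta (m + 1) t := by
  have h4 : (0:ℝ) < 4 ^ (m + 1) := by positivity
  have ht : 0 < t := by nlinarith
  have hz : ∀ n ∉ Finset.range (m + 2), (G (n + 1) x - G n x) * theta n t = 0 := by
    intro n hn
    have hn' : m + 2 ≤ n := by simpa using hn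
    have e1 : (4:ℝ) ^ (m + 2) * t ≤ 4 ^ n * t :=
      mul_le_mul_of_nonneg_right (pow_le_pow_right₀ (by norm_num) hn') ht.le
    have e2 : (4:ℝ) ^ (m + 2) = 4 * 4 ^ (m + 1) := by ring
    have : (2:ℝ) ≤ 4 ^ n * t := by nlinarith
    rw [theta_eq_zero this, mul_zero]
  rw [tsum_eq_sum hz, Finset.sum_range_succ]
  congr 1
  have hone : ∀ n ∈ Finset.range (m + 1),
      (G (n + 1) x - G n x) * theta n t = G (n + 1) x - G n x := by
    intro n hn
    have hn' : n ≤ m := by simpa [Nat.lt_succ_iff] using hn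
    have : (4:ℝ) ^ n * t ≤ 1 :=
      le_trans (mul_le_mul_of_nonneg_right (pow_le_pow_right₀ (by norm_num) hn') ht.le) h2
    rw [theta_eq_one this, mul_one]
  rw [Finset.sum_congr rfl hone, Finset.sum_range_sub (fun n => G n x)]

lemma combo_bound {a b c w ε : ℝ} (h0 : 0 ≤ w) (h1 : w ≤ 1) (ha : |a - c| ≤ ε)
    (hb : |b - c| ≤ ε) : |a + (b - a) * w - c| ≤ ε := by
  have key : a + (b - a) * w - c = (1 - w) * (a - c) + w * (b - c) := by ring
  rw [key]
  calc |(1 - w) * (a - c) + w * (b - c)| ≤ |(1 - w) * (a - c)| + |w * (b - c)| := abs_add_le _ _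
    _ = (1 - w) * |a - c| + w * |b - c| := by
        rw [abs_mul, abs_mul, abs_of_nonneg (by linarith), abs_of_nonneg h0]
    _ ≤ (1 - w) * ε + w * ε :=
        add_le_add (mul_le_mul_of_nonneg_left ha (by linarith))
          (mul_le_mul_of_nonneg_left hb h0)
    _ = ε := by ring

lemma exists_interval {t : ℝ} (ht : 0 < t) {N : ℕ} (hN : 4 ^ (N + 1) * t ≤ 1) :
    ∃ m, N ≤ m ∧ 1 < 4 ^ (m + 1) * t ∧ 4 ^ m * t ≤ 1 := by
  have hex : ∃ k, 1 < (4:ℝ) ^ (k + 1) * t := by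
    obtain ⟨k, hk⟩ := exists_pow_lt_of_lt_one ht (by norm_num : (4:ℝ)⁻¹ < 1)
    rw [inv_pow] at hk
    have hp : (0:ℝ) < (4:ℝ) ^ k := by positivity
    have hk' : 1 < (4:ℝ) ^ k * t := by
      calc (1:ℝ) = (4:ℝ) ^ k * ((4:ℝ) ^ k)⁻¹ := by field_simp
        _ < 4 ^ k * t := mul_lt_mul_of_pos_left hk hp
    have : (4:ℝ) ^ k ≤ 4 ^ (k + 1) := pow_le_pow_right₀ (by norm_num) (Nat.le_succ k)
    exact ⟨k, by nlinarith⟩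
  classical
  obtain ⟨m, h1, hmin⟩ : ∃ m, 1 < (4:ℝ) ^ (m + 1) * t ∧ ∀ k < m, ¬(1 < (4:ℝ) ^ (k + 1) * t) :=
    ⟨Nat.find hex, Nat.find_spec hex, fun k hk => Nat.find_min hex hk⟩
  have hm : N ≤ m := by
    by_contra hc
    push_neg at hc
    have e1 : (4:ℝ) ^ (m + 1) ≤ 4 ^ (N + 1) := pow_le_pow_right₀ (by norm_num) (by omega)
    nlinarith
  refine ⟨m, hm, h1, ?_⟩
  cases m with
  | zero =>
      have e1 : (1:ℝ) ≤ 4 ^ (N + 1) := by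
        calc (1:ℝ) = 1 ^ (N + 1) := (one_pow _).symm
          _ ≤ 4 ^ (N + 1) := pow_le_pow_left₀ (by norm_num) (by norm_num) _
      simp only [pow_zero, one_mul]
      nlinarith
  | succ m' =>
      have := hmin m' (Nat.lt_succ_self m')
      push_neg at this
      exact this

lemma fd_eq_combo (g : X → ℝ) {p : X × X} (m : ℕ)
    (h1 : 1 < 4 ^ (m + 1) * phi G p) (h2 : 4 ^ m * phi G p ≤ 1) :
    fd G g p = G (m + 1) p.1 + (G (m + 2) p.1 - G (m + 1) p.1) * theta (m + 1) (phi G p) := by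
  have h4 : (0:ℝ) < 4 ^ (m + 1) := by positivity
  have ht : 0 < phi G p := by nlinarith
  unfold fd
  rw [if_neg (ne_of_gt ht), tsum_eval G p.1 m h1 h2]
  ring

lemma fd_dist_le (g : X → ℝ) {p : X × X} {c ε : ℝ} {N : ℕ}
    (ht : 0 < phi G p) (hsmall : 4 ^ (N + 1) * phi G p ≤ 1)
    (hest : ∀ m, N ≤ m → 4 ^ m * phi G p ≤ 1 → ∀ k, (k = m + 1 ∨ k = m + 2) →
      |G k p.1 - c| ≤ ε) :
    |fd G g p - c| ≤ ε := by
  obtain ⟨m, hm, h1, h2⟩ := exists_interval ht hsmall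
  rw [fd_eq_combo G g m h1 h2]
  exact combo_bound (theta_nonneg _ _) (theta_le_one _ _)
    (hest m hm h2 _ (Or.inl rfl)) (hest m hm h2 _ (Or.inr rfl))


lemma fd_continuousAt [TopologicalSpace X] (hGc : ∀ n, Continuous (G n)) (g : X → ℝ)
    {p₀ : X × X} (h0 : phi G p₀ ≠ 0) : ContinuousAt (fd G g) p₀ := by
  have ht : 0 < phi G p₀ := lt_of_le_of_ne (phi_nonneg G p₀) (Ne.symm h0)
  obtain ⟨M, hM⟩ : ∃ M, (2:ℝ) ≤ 4 ^ M * (phi G p₀ / 2) := by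
    obtain ⟨M, hM⟩ := exists_pow_lt_of_lt_one (show (0:ℝ) < phi G p₀ / 8 by linarith)
      (by norm_num : (4:ℝ)⁻¹ < 1)
    rw [inv_pow] at hM
    have h4 : (0:ℝ) < (4:ℝ) ^ M := by positivity
    have : (1:ℝ) < 4 ^ M * (phi G p₀ / 8) := by
      calc (1:ℝ) = 4 ^ M * ((4:ℝ) ^ M)⁻¹ := by field_simp
        _ < _ := mul_lt_mul_of_pos_left hM h4
    exact ⟨M, by nlinarith⟩
  have hUopen : IsOpen ((phi G) ⁻¹' Ioi (phi G p₀ / 2)) :=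
    isOpen_Ioi.preimage (phi_continuous G hGc)
  have hp₀U : p₀ ∈ (phi G) ⁻¹' Ioi (phi G p₀ / 2) := by
    simp only [mem_preimage, mem_Ioi]; linarith
  have heq : ∀ p ∈ (phi G) ⁻¹' Ioi (phi G p₀ / 2), fd G g p =
      G 0 p.1 + ∑ n ∈ Finset.range M, (G (n + 1) p.1 - G n p.1) * theta n (phi G p) := by
    intro p hp
    have hpt : phi G p₀ / 2 < phi G p := hp
    unfold fd
    rw [if_neg (ne_of_gt (by linarith : (0:ℝ) < phi G p))]
    congr 1
    apply tsum_eq_sum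
    intro n hn
    have hn' : M ≤ n := by simpa using hn
    have e1 : (4:ℝ) ^ M ≤ 4 ^ n := pow_le_pow_right₀ (by norm_num) hn'
    have h4M : (0:ℝ) < 4 ^ M := by positivity
    have : (2:ℝ) ≤ 4 ^ n * phi G p := by
      calc (2:ℝ) ≤ 4 ^ M * (phi G p₀ / 2) := hM
        _ ≤ 4 ^ M * phi G p := by nlinarith
        _ ≤ 4 ^ n * phi G p := mul_le_mul_of_nonneg_right e1 (phi_nonneg G p)
    rw [theta_eq_zero this, mul_zero]
  have hcont : Continuous (fun p : X × X =>
      G 0 p.1 + ∑ n ∈ Finset.range M, (G (n + 1) p.1 - G n p.1) * theta n (phi G p)) := by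
    refine ((hGc 0).comp continuous_fst).add (continuous_finset_sum _ fun n _ => ?_)
    exact (((hGc (n + 1)).comp continuous_fst).sub ((hGc n).comp continuous_fst)).mul
      ((theta_continuous n).comp (phi_continuous G hGc))
  exact hcont.continuousAt.congr (by
    filter_upwards [hUopen.mem_nhds hp₀U] with p hp using (heq p hp).symm)

lemma small_of_lt {t : ℝ} {N : ℕ} (h : t < 4⁻¹ ^ (N + 1)) : 4 ^ (N + 1) * t ≤ 1 := by
  rw [inv_pow] at h
  have h4 : (0:ℝ) < 4 ^ (N + 1) := by positivity
  calc (4:ℝ) ^ (N + 1) * t ≤ 4 ^ (N + 1) * ((4:ℝ) ^ (N + 1))⁻¹ :=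
        mul_le_mul_of_nonneg_left h.le h4.le
    _ = 1 := by field_simp

lemma cw_line_fst [TopologicalSpace X] (hGc : ∀ n, Continuous (G n)) (g : X → ℝ)
    (hGlim : ∀ x, Tendsto (fun n => G n x) atTop (𝓝 (g x))) (x₁ : X)
    {p₀ : X × X} (hp₀ : p₀.1 = x₁) (h0 : phi G p₀ = 0) :
    ContinuousWithinAt (fd G g) {p : X × X | p.1 = x₁} p₀ := by
  have hfp₀ : fd G g p₀ = g x₁ := by unfold fd; rw [if_pos h0, hp₀]
  rw [ContinuousWithinAt, Metric.tendsto_nhds]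
  intro ε hε
  obtain ⟨N, hN⟩ := Metric.tendsto_atTop.mp (hGlim x₁) (ε / 2) (by linarith)
  have hδpos : (0:ℝ) < 4⁻¹ ^ (N + 1) := by positivity
  have hev : ∀ᶠ p in 𝓝[{p : X × X | p.1 = x₁}] p₀, phi G p < 4⁻¹ ^ (N + 1) := by
    have hcw : ContinuousWithinAt (phi G) {p : X × X | p.1 = x₁} p₀ :=
      (phi_continuous G hGc).continuousWithinAt
    rw [ContinuousWithinAt, h0] at hcw
    exact hcw.eventually_lt_const hδpos
  filter_upwards [hev, self_mem_nhdsWithin] with p hpφ hpS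
  have hpS' : p.1 = x₁ := hpS
  rw [Real.dist_eq, hfp₀]
  rcases eq_or_lt_of_le (phi_nonneg G p) with heq | hpos
  · have : fd G g p = g x₁ := by unfold fd; rw [if_pos heq.symm, hpS']
    rw [this]
    simpa using hε
  · have hb : |fd G g p - g x₁| ≤ ε / 2 := by
      refine fd_dist_le G g hpos (small_of_lt hpφ) ?_
      intro m hm _ k hk
      have hkN : N ≤ k := by rcases hk with rfl | rfl <;> omega
      have hd := hN k hkN
      rw [Real.dist_eq] at hd
      rw [hpS']
      exact hd.le
    linarith

lemma cw_line_snd [TopologicalSpace X] (hGc : ∀ n, Continuous (G n)) (g : X → ℝ)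
    (hGlim : ∀ x, Tendsto (fun n => G n x) atTop (𝓝 (g x))) (x₂ : X)
    {p₀ : X × X} (hp₀ : p₀.2 = x₂) (h0 : phi G p₀ = 0) :
    ContinuousWithinAt (fd G g) {p : X × X | p.2 = x₂} p₀ := by
  have hkey : ∀ x : X, (∀ k, G k x = G k x₂) → g x = g x₂ := by
    intro x hx
    have h1 := hGlim x
    rw [funext hx] at h1
    exact tendsto_nhds_unique h1 (hGlim x₂)
  have hfp₀ : fd G g p₀ = g x₂ := by
    unfold fd
    rw [if_pos h0]
    exact hkey _ (fun k => hp₀ ▸ eq_of_phi_eq_zero G h0 k)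
  rw [ContinuousWithinAt, Metric.tendsto_nhds]
  intro ε hε
  obtain ⟨N1, hN1⟩ := Metric.tendsto_atTop.mp (hGlim x₂) (ε / 4) (by linarith)
  have hmin4 : (0:ℝ) < min 1 (ε / 4) / 4 := by
    have : (0:ℝ) < min 1 (ε / 4) := lt_min one_pos (by linarith)
    linarith
  obtain ⟨N2, hN2⟩ := exists_pow_lt_of_lt_one hmin4 (by norm_num : (2:ℝ)⁻¹ < 1)
  set N := max N1 N2 with hNdef
  have hδpos : (0:ℝ) < 4⁻¹ ^ (N + 1) := by positivity
  have hev : ∀ᶠ p in 𝓝[{p : X × X | p.2 = x₂}] p₀, phi G p < 4⁻¹ ^ (N + 1) := by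
    have hcw : ContinuousWithinAt (phi G) {p : X × X | p.2 = x₂} p₀ :=
      (phi_continuous G hGc).continuousWithinAt
    rw [ContinuousWithinAt, h0] at hcw
    exact hcw.eventually_lt_const hδpos
  filter_upwards [hev, self_mem_nhdsWithin] with p hpφ hpS
  have hpS' : p.2 = x₂ := hpS
  rw [Real.dist_eq, hfp₀]
  rcases eq_or_lt_of_le (phi_nonneg G p) with heq | hpos
  · have hfd : fd G g p = g p.1 := by unfold fd; rw [if_pos heq.symm]
    have : g p.1 = g x₂ :=
      hkey _ (fun k => hpS' ▸ eq_of_phi_eq_zero G heq.symm k)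
    rw [hfd, this]
    simpa using hε
  · have hb : |fd G g p - g x₂| ≤ ε / 2 := by
      refine fd_dist_le G g hpos (small_of_lt hpφ) ?_
      intro m hm h2 k hk
      have hkN1 : N1 ≤ k := by
        have : N1 ≤ N := le_max_left _ _
        rcases hk with rfl | rfl <;> omega
      have hkm2 : k ≤ m + 2 := by rcases hk with rfl | rfl <;> omega
      -- bound 2^k * phi
      have h4m : (0:ℝ) < 4 ^ m := by positivity
      have e2 : phi G p ≤ 1 / 4 ^ m := by
        rw [le_div_iff₀ h4m]; linarith [h2]
      have e1 : (2:ℝ) ^ k ≤ 2 ^ (m + 2) := pow_le_pow_right₀ (by norm_num) hkm2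
      have hbb : 2 ^ k * phi G p ≤ 4 * (2:ℝ)⁻¹ ^ m := by
        calc (2:ℝ) ^ k * phi G p ≤ 2 ^ (m + 2) * (1 / 4 ^ m) :=
              mul_le_mul e1 e2 (phi_nonneg G p) (by positivity)
          _ = 4 * (2:ℝ)⁻¹ ^ m := by
              rw [inv_pow, show (4:ℝ) = 2 * 2 by norm_num, mul_pow]
              have h2m : (2:ℝ) ^ m ≠ 0 := by positivity
              field_simp
              ring
      have hmono : (2:ℝ)⁻¹ ^ m ≤ (2:ℝ)⁻¹ ^ N2 := by
        apply pow_le_pow_of_le_one (by norm_num) (by norm_num)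
        have : N2 ≤ N := le_max_right _ _
        omega
      have hsmall2 : 2 ^ k * phi G p < min 1 (ε / 4) := by
        calc (2:ℝ) ^ k * phi G p ≤ 4 * (2:ℝ)⁻¹ ^ m := hbb
          _ ≤ 4 * (2:ℝ)⁻¹ ^ N2 := by linarith
          _ < min 1 (ε / 4) := by linarith
      have habs : |G k p.1 - G k p.2| ≤ 2 ^ k * phi G p :=
        abs_le_of_phi G (lt_of_lt_of_le hsmall2 (min_le_left _ _))
      have h1abs : |G k p.1 - G k p.2| < ε / 4 :=
        lt_of_le_of_lt habs (lt_of_lt_of_le hsmall2 (min_le_right _ _))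
      have h2abs : |G k p.2 - g x₂| < ε / 4 := by
        rw [hpS']
        have := hN1 k hkN1
        rwa [Real.dist_eq] at this
      calc |G k p.1 - g x₂| = |(G k p.1 - G k p.2) + (G k p.2 - g x₂)| := by ring_nf
        _ ≤ |G k p.1 - G k p.2| + |G k p.2 - g x₂| := abs_add_le _ _
        _ ≤ ε / 2 := by linarith
    linarith

end BaireDiagAux

open BaireDiagAux in
theorem baire_one_is_diagonal_of_separately_continuous_finer
    {X : Type*} [tX : TopologicalSpace X]
    (ν : TopologicalSpace (X × X))
    (hfst : @Continuous (X × X) X ν tX Prod.fst)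
    (hsnd : @Continuous (X × X) X ν tX Prod.snd)
    (g : X → ℝ) (hg : BaireOne g) :
    ∃ f : X × X → ℝ,
      (∀ x₂ : X, @ContinuousOn (X × X) ℝ ν _ f {p : X × X | p.2 = x₂}) ∧
      (∀ x₁ : X, @ContinuousOn (X × X) ℝ ν _ f {p : X × X | p.1 = x₁}) ∧
      ∀ x : X, f (x, x) = g x := by
  classical
  obtain ⟨G, hGc, hGlim⟩ := hg
  have key1 : ∀ x₂ : X, @ContinuousOn (X × X) ℝ instTopologicalSpaceProd _ (fd G g)
      {p : X × X | p.2 = x₂} := by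
    intro x₂ p₀ hp₀
    by_cases h0 : phi G p₀ = 0
    · exact cw_line_snd G hGc g hGlim x₂ hp₀ h0
    · exact @ContinuousAt.continuousWithinAt (X × X) ℝ instTopologicalSpaceProd _ _ _ _
        (fd_continuousAt G hGc g h0)
  have key2 : ∀ x₁ : X, @ContinuousOn (X × X) ℝ instTopologicalSpaceProd _ (fd G g)
      {p : X × X | p.1 = x₁} := by
    intro x₁ p₀ hp₀
    by_cases h0 : phi G p₀ = 0
    · exact cw_line_fst G hGc g hGlim x₁ hp₀ h0
    · exact @ContinuousAt.continuousWithinAt (X × X) ℝ instTopologicalSpaceProd _ _ _ _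
        (fd_continuousAt G hGc g h0)
  have hmk : @Continuous (X × X) (X × X) ν instTopologicalSpaceProd
      (fun p => (p.1, p.2)) := hfst.prodMk hsnd
  have transfer : ∀ S : Set (X × X),
      @ContinuousOn (X × X) ℝ instTopologicalSpaceProd _ (fd G g) S →
      @ContinuousOn _ _ ν _ (fd G g) S := by
    intro S h
    have hco : @ContinuousOn (X × X) (X × X) ν instTopologicalSpaceProd
        (fun p => (p.1, p.2)) S :=
      @Continuous.continuousOn (X × X) (X × X) ν instTopologicalSpaceProd _ S hmk
    have h2 := @ContinuousOn.comp (X × X) (X × X) ℝ ν instTopologicalSpaceProd _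
      (fun p => (p.1, p.2)) S (fd G g) S h hco
      (fun p hp => by simpa using hp)
    have he : (fd G g ∘ fun p : X × X => (p.1, p.2)) = fd G g := by
      funext p; simp [Function.comp]
    rwa [he] at h2
  refine ⟨fd G g, fun x₂ => transfer _ (key1 x₂), fun x₁ => transfer _ (key2 x₁), fun x => ?_⟩
  unfold fd
  rw [if_pos (phi_diag G x)]
end
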